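/- arXiv:1912.12747 — 3 statements merged into one kernel-verified Lean document; each statement's English description precedes it below -/
import Mathlib

section
/- Generic-join recurrence: for a natural join Q = ⋈_{F∈E} R_F over attribute set V and any I ⊆ V, Q = ⋃_{t_I ∈ Q_I} ({t_I} × Q[t_I]), where Q_I = ⋈_F π_{F∩I}(R_F) and Q[t_I] = ⋈_F π_{V∖I}(R_F ⋉ t_I). -/
open Classical

variable {V U ι : Type*}

/-- The natural join of relations `R i` on attribute sets `F i`. -/
def Join (F : ι → Set V) (R : ∀ i, Set (↥(F i) → U)) : Set (V → U) :=
  { t | ∀ i, (fun x : ↥(F i) => t x.1) ∈ R i }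

/-- Projection of a set of full tuples onto an attribute set `I`. -/
def projFull (I : Set V) (Q : Set (V → U)) : Set (↥I → U) :=
  (fun t (x : ↥I) => t x.1) '' Q

/-- Projection of a relation on `A` onto `S ⊆ A`. -/
def projRel (A S : Set V) (h : S ⊆ A) (R : Set (↥A → U)) : Set (↥S → U) :=
  (fun t (x : ↥S) => t ⟨x.1, h x.2⟩) '' R

/-- Join of relations on subsets of an attribute set `W`, as a set of tuples on `W`. -/
def JoinOn (W : Set V) (G : ι → Set V) (hG : ∀ i, G i ⊆ W)
    (R : ∀ i, Set (↥(G i) → U)) : Set (↥W → U) :=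
  { t | ∀ i, (fun x : ↥(G i) => t ⟨x.1, hG i x.2⟩) ∈ R i }

/-- The subquery `Q_I := ⋈_F π_{F∩I}(R_F)`. -/
def subQ (F : ι → Set V) (R : ∀ i, Set (↥(F i) → U)) (I : Set V) : Set (↥I → U) :=
  JoinOn I (fun i => F i ∩ I) (fun _ => Set.inter_subset_right)
    (fun i => projRel (F i) (F i ∩ I) Set.inter_subset_left (R i))

/-- Semijoin of a relation on `A` with the singleton relation `{tI}` on `I`. -/
def semiJoin (A I : Set V) (R : Set (↥A → U)) (tI : ↥I → U) : Set (↥A → U) :=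
  { s ∈ R | ∀ (v : V) (hA : v ∈ A) (hI : v ∈ I), s ⟨v, hA⟩ = tI ⟨v, hI⟩ }

/-- Semijoin of a set of full tuples with the singleton relation `{tI}` on `I`. -/
def semiJoinFull (Q : Set (V → U)) (I : Set V) (tI : ↥I → U) : Set (V → U) :=
  { t ∈ Q | ∀ (v : V) (hI : v ∈ I), t v = tI ⟨v, hI⟩ }

/-- The residual query `Q[tI] := ⋈_F π_{V∖I}(R_F ⋉ tI)`. -/
def residQ (F : ι → Set V) (R : ∀ i, Set (↥(F i) → U)) (I : Set V) (tI : ↥I → U) :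
    Set (↥(Iᶜ) → U) :=
  JoinOn Iᶜ (fun i => F i ∩ Iᶜ) (fun _ => Set.inter_subset_right)
    (fun i => projRel (F i) (F i ∩ Iᶜ) Set.inter_subset_left (semiJoin (F i) I (R i) tI))

/-- Glue a tuple on `I` with a tuple on `Iᶜ` into a full tuple (`{tI} × ·`). -/
noncomputable def glue (I : Set V) (s : ↥I → U) (u : ↥(Iᶜ) → U) : V → U :=
  fun v => if h : v ∈ I then s ⟨v, h⟩ else u ⟨v, h⟩

/-- the generic-join recurrence
`Q = ⋃_{t_I ∈ Q_I} ({t_I} × Q[t_I])`. -/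
theorem generic_join_recurrence
    (F : ι → Set V) (R : ∀ i, Set (↥(F i) → U))
    (hV : ∀ v : V, ∃ i, v ∈ F i) (I : Set V) :
    Join F R = ⋃ tI ∈ subQ F R I, glue I tI '' residQ F R I tI := by
  ext t
  simp only [Set.mem_iUnion, Set.mem_image]
  constructor
  · intro ht
    refine ⟨fun x => t x.1, ?_, fun x => t x.1, ?_, ?_⟩
    · intro i
      exact ⟨fun x => t x.1, ht i, rfl⟩
    · intro i
      exact ⟨fun x => t x.1, ⟨ht i, fun v hA hI => rfl⟩, rfl⟩
    · funext v
      unfold glue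
      by_cases h : v ∈ I <;> simp [h]
  · rintro ⟨tI, htI, u, hu, rfl⟩
    intro i
    obtain ⟨s, hs, hproj⟩ := hu i
    have : (fun x : ↥(F i) => glue I tI u x.1) = s := by
      funext x
      unfold glue
      by_cases h : x.1 ∈ I
      · simp only [dif_pos h]
        exact (hs.2 x.1 x.2 h).symm
      · simp only [dif_neg h]
        exact (congrFun hproj ⟨x.1, ⟨x.2, h⟩⟩).symm
    rw [this]
    exact hs.1
end

section
/- Nested subquery decomposition: for a natural join Q over attribute set V and disjoint subsets I, J ⊆ V, one has Q_{I∪J} = ⋃_{t_I ∈ Q_I} ({t_I} × (Q[t_I])_J), i.e., the subquery on I ∪ J decomposes as the union over solutions t_I of the I-subquery of the J-subqueries of the residual queries Q[t_I]. -/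
open Classical

variable {V U ι : Type*}

/-- Glue a tuple on `I` with a tuple on `J` into a tuple on `I ∪ J`. -/
noncomputable def glue2 (I J : Set V) (s : ↥I → U) (u : ↥J → U) : ↥(I ∪ J) → U :=
  fun v => if h : v.1 ∈ I then s ⟨v.1, h⟩
           else u ⟨v.1, ((Set.mem_union v.1 I J).mp v.2).resolve_left h⟩

/-- The `J`-subquery `(Q[t_I])_J` of the residual query `Q[t_I]`. -/
def residSubQ (F : ι → Set V) (R : ∀ i, Set (↥(F i) → U)) (I J : Set V) (tI : ↥I → U) :
    Set (↥J → U) :=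
  JoinOn J (fun i => (F i ∩ Iᶜ) ∩ J) (fun _ => Set.inter_subset_right)
    (fun i => projRel (F i ∩ Iᶜ) ((F i ∩ Iᶜ) ∩ J) Set.inter_subset_left
      (projRel (F i) (F i ∩ Iᶜ) Set.inter_subset_left (semiJoin (F i) I (R i) tI)))

/-- nested subquery decomposition
`Q_{I∪J} = ⋃_{t_I ∈ Q_I} ({t_I} × (Q[t_I])_J)` for disjoint `I, J`. -/
theorem nested_subquery_decomposition
    (F : ι → Set V) (R : ∀ i, Set (↥(F i) → U))
    (hV : ∀ v : V, ∃ i, v ∈ F i)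
    (I J : Set V) (hdisj : Disjoint I J) :
    subQ F R (I ∪ J) = ⋃ tI ∈ subQ F R I, glue2 I J tI '' residSubQ F R I J tI := by
  
  ext t
  simp only [Set.mem_iUnion, Set.mem_image]
  constructor
  · intro ht
    set tI : ↥I → U := fun x => t ⟨x.1, Or.inl x.2⟩ with htI
    set u : ↥J → U := fun x => t ⟨x.1, Or.inr x.2⟩ with hu
    refine ⟨tI, ?_, u, ?_, ?_⟩
    · intro i
      obtain ⟨s, hs, hst⟩ := ht i
      refine ⟨s, hs, ?_⟩
      funext x
      have := congrFun hst ⟨x.1, x.2.1, Or.inl x.2.2⟩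
      exact this
    · intro i
      obtain ⟨s, hs, hst⟩ := ht i
      refine ⟨fun x => s ⟨x.1, x.2.1⟩, ⟨s, ⟨hs, ?_⟩, rfl⟩, ?_⟩
      · intro v hA hI
        exact congrFun hst ⟨v, hA, Or.inl hI⟩
      · funext x
        exact congrFun hst ⟨x.1, x.2.1.1, Or.inr x.2.2⟩
    · funext x
      simp only [glue2]
      by_cases h : x.1 ∈ I
      · simp [h, htI]
      · simp [h, hu]
  · rintro ⟨tI, htI, u, hu, rfl⟩
    intro i
    obtain ⟨w, ⟨s, ⟨hs, hsemi⟩, rfl⟩, hw⟩ := hu i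
    refine ⟨s, hs, ?_⟩
    funext x
    simp only [glue2]
    by_cases h : x.1 ∈ I
    · simp only [h, dif_pos]
      exact hsemi x.1 x.2.1 h
    · simp only [h, dif_neg, not_false_iff]
      have hJ : x.1 ∈ J := x.2.2.resolve_left h
      exact congrFun hw ⟨x.1, ⟨x.2.1, h⟩, hJ⟩
end

section
/- Correctness of the recursive generic radix triejoin: define recursively gRTJ(Q) for a join query Q on attribute set V: if |V| ≤ 1, return the join answer directly (by enumeration); otherwise pick any attribute A ∈ V, set I = {A}, compute L = Q_I, and return ⋃_{t_I ∈ L} ({t_I} × gRTJ(Q[t_I])). Then for every query Q and database, gRTJ(Q) equals the answer to Q. -/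
open Classical

variable {V U ι : Type*}

/-- Edge sets of the residual query on the vertex type `↥({A}ᶜ)`. -/
def resEdges {V : Type*} {ι : Type*} (F : ι → Set V) (A : V) :
    ι → Set (↥(({A} : Set V)ᶜ)) :=
  fun i => {x | x.1 ∈ F i}

/-- Relations of the residual query `Q[t_I]` (with `I = {A}`) on the
vertex type `↥({A}ᶜ)`: `π_{F∖{A}}(R_F ⋉ t_I)`. -/
def resRels {V U ι : Type*} (F : ι → Set V) (R : ∀ i, Set (↥(F i) → U)) (A : V)
    (tI : ↥({A} : Set V) → U) : ∀ i, Set (↥(resEdges F A i) → U) :=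
  fun i => { u | ∃ s ∈ R i, (∀ hA : A ∈ F i, s ⟨A, hA⟩ = tI ⟨A, rfl⟩) ∧
      ∀ y : ↥(resEdges F A i), u y = s ⟨y.1.1, y.2⟩ }

lemma join_decomp {U ι V : Type} (F : ι → Set V) (R : ∀ i, Set (↥(F i) → U)) (A : V) :
    Join F R = ⋃ tI ∈ subQ F R ({A} : Set V),
      glue ({A} : Set V) tI '' Join (resEdges F A) (resRels F R A tI) := by
  ext t
  constructor
  · intro ht
    set tI : ↥({A} : Set V) → U := fun x => t x.1 with htI
    set u : ↥(({A} : Set V)ᶜ) → U := fun x => t x.1 with hu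
    refine Set.mem_biUnion (x := tI) ?_ ?_
    · intro i
      exact ⟨fun x => t x.1, ht i, by funext x; rfl⟩
    · refine ⟨u, ?_, ?_⟩
      · intro i
        exact ⟨fun x => t x.1, ht i, fun hA => rfl, fun y => rfl⟩
      · funext v
        by_cases h : v ∈ ({A} : Set V) <;> simp [glue, h, htI, hu]
  · intro ht
    rcases Set.mem_iUnion₂.1 ht with ⟨tI, htI, u, hu, rfl⟩
    intro i
    rcases hu i with ⟨s, hs, hsA, hsu⟩
    have : (fun x : ↥(F i) => glue ({A} : Set V) tI u x.1) = s := by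
      funext x
      by_cases h : x.1 ∈ ({A} : Set V)
      · have hxA : x.1 = A := h
        have hA : A ∈ F i := hxA ▸ x.2
        have hsx : s x = s ⟨A, hA⟩ := by congr 1; exact Subtype.ext hxA
        have htx : tI ⟨x.1, h⟩ = tI ⟨A, rfl⟩ := by congr 1; exact Subtype.ext hxA
        simp [glue, h, hsx, hsA hA, htx]
      · have := hsu ⟨⟨x.1, h⟩, x.2⟩
        simp [glue, h, this]
    rw [this]; exact hs

/-- correctness of the recursive generic radix triejoin.  Any
procedure `G` that returns the join answer directly on queries with at most one
attribute, and on larger queries picks some attribute `A`, computes `L = Q_{{A}}`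
and returns `⋃_{t_I ∈ L} ({t_I} × G(Q[t_I]))`, computes the answer of every query. -/
theorem gRTJ_correct {U ι : Type}
    (G : ∀ (V : Type) [Finite V] (F : ι → Set V), (∀ i, Set (↥(F i) → U)) → Set (V → U))
    (hbase : ∀ (V : Type) [Finite V] (F : ι → Set V) (R : ∀ i, Set (↥(F i) → U)),
      Nat.card V ≤ 1 → G V F R = Join F R)
    (hstep : ∀ (V : Type) [Finite V] (F : ι → Set V) (R : ∀ i, Set (↥(F i) → U)),
      (∀ v : V, ∃ i, v ∈ F i) → 2 ≤ Nat.card V →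
      ∃ A : V, G V F R =
        ⋃ tI ∈ subQ F R ({A} : Set V),
          glue ({A} : Set V) tI '' G (↥(({A} : Set V)ᶜ)) (resEdges F A) (resRels F R A tI)) :
    ∀ (V : Type) [Finite V] (F : ι → Set V) (R : ∀ i, Set (↥(F i) → U)),
      (∀ v : V, ∃ i, v ∈ F i) → G V F R = Join F R := by
  suffices H : ∀ (n : ℕ) (V : Type) [Finite V] (F : ι → Set V) (R : ∀ i, Set (↥(F i) → U)),
      Nat.card V ≤ n → (∀ v : V, ∃ i, v ∈ F i) → G V F R = Join F R by
    intro V _ F R hc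
    exact H (Nat.card V) V F R le_rfl hc
  intro n
  induction n with
  | zero =>
    intro V _ F R hle _
    exact hbase V F R (hle.trans (by omega))
  | succ n ih =>
    intro V _ F R hle hcov
    by_cases h1 : Nat.card V ≤ 1
    · exact hbase V F R h1
    · have h2 : 2 ≤ Nat.card V := by omega
      obtain ⟨A, hG⟩ := hstep V F R hcov h2
      rw [hG, join_decomp F R A]
      have hcard : Nat.card ↥(({A} : Set V)ᶜ) ≤ n := by
        have h1 : Nat.card ↥(({A} : Set V)ᶜ) = (({A} : Set V)ᶜ).ncard :=
          Nat.card_coe_set_eq _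
        have h2 : (({A} : Set V)ᶜ).ncard < (Set.univ : Set V).ncard := by
          refine Set.ncard_lt_ncard ?_ (Set.finite_univ)
          refine ⟨Set.subset_univ _, fun hsub => ?_⟩
          have := hsub (Set.mem_univ A)
          simp at this
        rw [Set.ncard_univ] at h2
        omega
      have hcov' : ∀ x : ↥(({A} : Set V)ᶜ), ∃ i, x ∈ resEdges F A i := fun x => hcov x.1
      have hres : ∀ tI : ↥({A} : Set V) → U,
          G (↥(({A} : Set V)ᶜ)) (resEdges F A) (resRels F R A tI)
            = Join (resEdges F A) (resRels F R A tI) :=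
        fun tI => ih (↥(({A} : Set V)ᶜ)) (resEdges F A) (resRels F R A tI) hcard hcov'
      exact Set.iUnion₂_congr fun tI _ => by rw [hres tI]
end
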